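/- arXiv:math/0201139 — 3 statements merged into one kernel-verified Lean document; each statement's English description precedes it below -/
import Mathlib

section
/- Let R be a commutative ring and let M be an (n+1)×(n+1) matrix over R whose row sums and column sums are all zero: Σ_j M_{ij} = 0 for every row index i, and Σ_i M_{ij} = 0 for every column index j. Then det M = 0, and the determinants of the principal minors of M are all equal: for any two indices k and l, det M^{(k)} = det M^{(l)}. (This is the matrix content of Lemma 'lzro' of the paper: for an Ad-invariant quadratic exponent the full matrix ⦃l_{ij}(a)⦄ is degenerate and the determinant det′ of its (k,k)-minor is independent of k.) -/
open Matrix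

lemma aux_expand {R : Type*} [CommRing R] {n : ℕ}
    (N : Matrix (Fin (n + 1)) (Fin (n + 1)) R) (k : Fin (n + 1))
    (h : ∀ j, N k j = if j = k then (1:R) else 0) :
    N.det = (N.submatrix k.succAbove k.succAbove).det := by
  rw [Matrix.det_succ_row N k, Finset.sum_eq_single k]
  · rw [h k, if_pos rfl]
    have h2 : (-1 : R) ^ ((k : ℕ) + (k : ℕ)) = 1 := by
      rw [← two_mul, pow_mul]; norm_num
    rw [h2, one_mul, one_mul]
  · intro j _ hj
    rw [h j, if_neg hj, mul_zero, zero_mul]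
  · simp

lemma aux_missing {R : Type*} [CommRing R] {n : ℕ}
    (M : Matrix (Fin (n + 1)) (Fin (n + 1)) R) (l : Fin (n + 1))
    (f : Fin n → Fin (n + 1)) (hf : Function.Injective f)
    (hr : Set.range f = Set.range l.succAbove) :
    (M.submatrix f f).det = (M.submatrix l.succAbove l.succAbove).det := by
  have hg : Function.Injective l.succAbove := Fin.succAbove_right_injective
  let e : Fin n ≃ Fin n :=
    ((Equiv.ofInjective f hf).trans (Equiv.setCongr hr)).trans (Equiv.ofInjective _ hg).symm
  have key : ∀ a, l.succAbove (e a) = f a := by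
    intro a
    have h1 : (Equiv.ofInjective _ hg) (e a) = (Equiv.setCongr hr) ((Equiv.ofInjective f hf) a) := by
      simp [e]
    have := congrArg Subtype.val h1
    simpa using this
  have : M.submatrix f f = (M.submatrix l.succAbove l.succAbove).submatrix e e := by
    ext a b
    simp [key]
  rw [this, Matrix.det_submatrix_equiv_self]

lemma aux_key {R : Type*} [CommRing R] {n : ℕ}
    (M : Matrix (Fin (n + 1)) (Fin (n + 1)) R)
    (hrow : ∀ i, ∑ j, M i j = 0) (hcol : ∀ j, ∑ i, M i j = 0)
    (k l : Fin (n + 1)) (hkl : k ≠ l) :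
    (M.submatrix (Fin.succAbove k) (Fin.succAbove k)).det =
      (M.submatrix (Fin.succAbove l) (Fin.succAbove l)).det := by
  have hlk : l ≠ k := hkl.symm
  set A : Matrix (Fin (n+1)) (Fin (n+1)) R :=
    M.updateRow k (fun j => if j = k then (1:R) else 0) with hAd
  set B : Matrix (Fin (n+1)) (Fin (n+1)) R :=
    A.updateCol k (fun i => if i = k then (1:R) else 0) with hBd
  set C : Matrix (Fin (n+1)) (Fin (n+1)) R :=
    B.updateCol l (fun i => if i = k then (1:R) else -M i k) with hCd
  set D : Matrix (Fin (n+1)) (Fin (n+1)) R :=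
    C.updateRow l (fun j => if j = k then (1:R) else if j = l then 1 + M k k else -M k j) with hDd
  set E : Matrix (Fin (n+1)) (Fin (n+1)) R :=
    D.updateRow l (D l + (-1 : R) • D k) with hEd
  set F : Matrix (Fin (n+1)) (Fin (n+1)) R :=
    E.updateCol l (fun i => E i l + (-1 : R) • E i k) with hFd
  -- entry formulas
  have hAe : ∀ i j, A i j = if i = k then (if j = k then (1:R) else 0) else M i j := by
    intro i j; simp [hAd, Matrix.updateRow_apply]
  have hBe : ∀ i j, B i j =
      if i = k then (if j = k then (1:R) else 0) else if j = k then 0 else M i j := by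
    intro i j
    simp only [hBd, Matrix.updateCol_apply, hAe]
    split_ifs <;> rfl
  have hCe : ∀ i j, C i j =
      if j = l then (if i = k then (1:R) else -M i k)
      else if i = k then (if j = k then (1:R) else 0) else if j = k then 0 else M i j := by
    intro i j
    simp only [hCd, Matrix.updateCol_apply, hBe]
  have hDe : ∀ i j, D i j =
      if i = l then (if j = k then (1:R) else if j = l then 1 + M k k else -M k j)
      else C i j := by
    intro i j; simp [hDd, Matrix.updateRow_apply]
  have hEe : ∀ i j, E i j = if i = l then D l j - D k j else D i j := by
    intro i j
    rw [hEd, Matrix.updateRow_apply]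
    by_cases hi : i = l
    · rw [if_pos hi, if_pos hi]; simp; ring
    · rw [if_neg hi, if_neg hi]
  have hFe : ∀ i j, F i j = if j = l then E i l - E i k else E i j := by
    intro i j
    rw [hFd, Matrix.updateCol_apply]
    by_cases hj : j = l
    · rw [if_pos hj, if_pos hj]; simp; ring
    · rw [if_neg hj, if_neg hj]
  -- determinant equalities along the chain
  have h1 : (M.submatrix k.succAbove k.succAbove).det = A.det := by
    have hsub : A.submatrix k.succAbove k.succAbove = M.submatrix k.succAbove k.succAbove := by
      ext a b
      simp [hAe, (Fin.succAbove_ne k a)]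
    rw [aux_expand A k (fun j => by simp [hAe]), hsub]
  have h2 : B.det = A.det := by
    have hw : (fun i => if i = k then (1:R) else 0) = fun i => ∑ j, (1:R) • A i j := by
      funext i
      by_cases hi : i = k
      · simp [hAe, hi, Fintype.sum_ite_eq']
      · simp [hAe, hi, hrow i]
    rw [hBd, hw, Matrix.det_updateCol_sum, one_smul]
  have h3 : C.det = B.det := by
    have hw : (fun i => if i = k then (1:R) else -M i k) = fun i => ∑ j, (1:R) • B i j := by
      funext i
      by_cases hi : i = k
      · simp [hBe, hi, Fintype.sum_ite_eq']
      · have hB2 : ∀ j, B i j = M i j + (if j = k then -M i k else 0) := by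
          intro j
          rw [hBe]
          by_cases hj : j = k
          · simp [hi, hj]
          · simp [hi, hj]
        simp only [one_smul]
        rw [Finset.sum_congr rfl fun j _ => hB2 j, Finset.sum_add_distrib, hrow i, zero_add,
          Fintype.sum_ite_eq']
        simp [hi]
    rw [hCd, hw, Matrix.det_updateCol_sum, one_smul]
  have h4 : D.det = C.det := by
    have hw : (fun j => if j = k then (1:R) else if j = l then 1 + M k k else -M k j)
        = ∑ i, (1:R) • C i := by
      funext j
      rw [Finset.sum_apply]
      simp only [Pi.smul_apply, one_smul]
      by_cases hj : j = k
      · have hC : ∀ i, C i j = if i = k then (1:R) else 0 := by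
          intro i
          rw [hCe, if_neg (fun h => hkl (hj.symm.trans h))]
          simp [hj]
        rw [Finset.sum_congr rfl fun i _ => hC i, Fintype.sum_ite_eq']
        simp [hj]
      · by_cases hjl : j = l
        · have hC : ∀ i, C i j = -M i k + (if i = k then 1 + M k k else 0) := by
            intro i
            rw [hCe, if_pos hjl]
            by_cases hi : i = k
            · simp [hi]; try ring
            · simp [hi]
          rw [Finset.sum_congr rfl fun i _ => hC i, Finset.sum_add_distrib,
            Finset.sum_neg_distrib, hcol k, neg_zero, zero_add, Fintype.sum_ite_eq']
          simp [hj, hjl, hlk]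
        · have hC : ∀ i, C i j = M i j + (if i = k then -M k j else 0) := by
            intro i
            rw [hCe, if_neg hjl]
            by_cases hi : i = k
            · simp [hi, hj]
            · simp [hi, hj]
          rw [Finset.sum_congr rfl fun i _ => hC i, Finset.sum_add_distrib, hcol j, zero_add,
            Fintype.sum_ite_eq']
          simp [hj, hjl]
    rw [hDd, hw]
    have := Matrix.det_updateRow_sum C l (fun _ => (1:R))
    simpa using this
  have h5 : E.det = D.det := by
    rw [hEd]; exact Matrix.det_updateRow_add_smul_self D hlk (-1)
  have h6 : F.det = E.det := by
    rw [hFd]; exact Matrix.det_updateCol_add_smul_self E hlk (-1)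
  -- the normalized matrix F
  have hFm : ∀ i j, i ≠ k → j ≠ k →
      F i j = (if i = l then (-1:R) else 1) *
        ((if j = l then (-1:R) else 1) * M (if i = l then k else i) (if j = l then k else j)) := by
    intro i j hik hjk
    simp only [hFe, hEe, hDe, hCe]
    split_ifs <;> ring
  have hFk : ∀ j, F k j = if j = k then (1:R) else 0 := by
    intro j
    by_cases hjl : j = l
    · simp only [hFe, hEe, hDe, hCe]
      simp [hjl, hlk, hkl]
    · simp only [hFe, hEe, hDe, hCe]
      simp [hjl, hlk, hkl]
  have hdetF : F.det = (F.submatrix k.succAbove k.succAbove).det := aux_expand F k hFk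
  -- identify the minor of F with a reindexed minor of M
  set σ : Equiv.Perm (Fin (n+1)) := Equiv.swap k l with hσd
  set N : Matrix (Fin n) (Fin n) R :=
    M.submatrix (⇑σ ∘ k.succAbove) (⇑σ ∘ k.succAbove) with hNd
  set v : Fin n → R := fun a => if k.succAbove a = l then (-1:R) else 1 with hvd
  have hswap : ∀ i : Fin (n+1), i ≠ k → (if i = l then k else i) = σ i := by
    intro i hik
    by_cases hil : i = l
    · simp [hil, hσd, Equiv.swap_apply_right]
    · rw [if_neg hil, hσd, Equiv.swap_apply_of_ne_of_ne hik hil]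
  have hsub : F.submatrix k.succAbove k.succAbove =
      Matrix.of (fun a b => v a * (Matrix.of (fun a b => v b * N a b)) a b) := by
    ext a b
    simp only [Matrix.submatrix_apply, Matrix.of_apply, hNd, hvd]
    rw [hFm _ _ (Fin.succAbove_ne k a) (Fin.succAbove_ne k b),
      hswap _ (Fin.succAbove_ne k a), hswap _ (Fin.succAbove_ne k b)]
    rfl
  have hdet2 : (F.submatrix k.succAbove k.succAbove).det = N.det := by
    rw [hsub, Matrix.det_mul_column v _, Matrix.det_mul_row v _, ← mul_assoc,
      ← Finset.prod_mul_distrib]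
    have hv1 : ∀ a : Fin n, v a * v a = 1 := by
      intro a; by_cases h : k.succAbove a = l <;> simp [hvd, h]
    rw [Finset.prod_congr rfl fun a _ => hv1 a, Finset.prod_const_one, one_mul]
  have hdet3 : N.det = (M.submatrix l.succAbove l.succAbove).det := by
    rw [hNd]
    refine aux_missing M l _ ((Equiv.injective σ).comp Fin.succAbove_right_injective) ?_
    rw [Set.range_comp, Fin.range_succAbove, Fin.range_succAbove,
      Set.image_compl_eq σ.bijective, Set.image_singleton, hσd, Equiv.swap_apply_left]
  rw [h1, ← h2, ← h3, ← h4, ← h5, ← h6, hdetF, hdet2, hdet3]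

/-- If all row sums and all column sums of a square matrix `M` vanish, then `det M = 0`
and all the principal minors of `M` (obtained by deleting the `k`-th row and `k`-th
column) have the same determinant, independent of `k`. -/
theorem det_eq_zero_and_principal_minors_det_eq
    {R : Type*} [CommRing R] {n : ℕ}
    (M : Matrix (Fin (n + 1)) (Fin (n + 1)) R)
    (hrow : ∀ i, ∑ j, M i j = 0) (hcol : ∀ j, ∑ i, M i j = 0) :
    M.det = 0 ∧ ∀ k l : Fin (n + 1),
      (M.submatrix (Fin.succAbove k) (Fin.succAbove k)).det =
        (M.submatrix (Fin.succAbove l) (Fin.succAbove l)).det := by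
  constructor
  · have hs : (∑ i, (1:R) • M i) = 0 := by
      funext j
      rw [Finset.sum_apply]
      simpa using hcol j
    have h := Matrix.det_updateRow_sum M 0 (fun _ => (1:R))
    rw [hs] at h
    have h0 : (M.updateRow 0 (0 : Fin (n+1) → R)).det = 0 :=
      Matrix.det_eq_zero_of_row_eq_zero 0 (fun j => by simp)
    rw [h0] at h
    simpa using h.symm
  · intro k l
    by_cases hkl : k = l
    · rw [hkl]
    · exact aux_key M hrow hcol k l hkl
end

section
/- Let A be a Banach algebra over ℝ and x, Δ ∈ A. Then the function t ↦ exp(−x) * exp(x + t•Δ) from ℝ to A is differentiable at t = 0, with derivative Σ_{n=0}^{∞} (1/(n+1)!) • (−ad x)^n(Δ) (a convergent series in A). (This is the derivative-of-the-exponential formula e^{−X} e^{X+ΔX} − 1 ≈ ((1 − e^{−ad_X})/ad_X) ΔX, equations (1.44)–(1.45) and (6.16*3) of the paper, used to compute the invariant measure on the coadjoint orbit.) -/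
/-!
With `g s = exp (-(s • x)) * exp (s • y)` one has `g' s = exp (-(s • x)) * (y - x) * exp (s • y)`,
so for `y = x + t • Δ` the fundamental theorem of calculus gives
`exp (-x) * exp (x + t • Δ) = 1 + t • ∫ s in 0..1, exp (-(s • x)) * Δ * exp (s • (x + t • Δ))`.
The integral is continuous in `t`, hence the derivative at `t = 0` is its value at `t = 0`.
There the integrand is `exp (s • L) Δ` for the operator `L = -ad x`: it is the sum of the commuting
operators `z ↦ z * x` and `z ↦ -x * z`, whose exponentials are right multiplication by `exp x` and
left multiplication by `exp (-x)`. Integrating the exponential series of `s • L` termwise over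
`[0, 1]` produces the coefficients `1 / (n + 1)!`.
-/

open NormedSpace Filter Topology MeasureTheory intervalIntegral
open scoped Nat

theorem hasDerivAt_of_eq_add_sub_smul {𝕜 E : Type*} [NontriviallyNormedField 𝕜]
    [NormedAddCommGroup E] [NormedSpace 𝕜 E] {f G : 𝕜 → E} {a : 𝕜} {c : E}
    (h : ∀ t, f t = c + (t - a) • G t) (hG : ContinuousAt G a) : HasDerivAt f (G a) a := by
  rw [hasDerivAt_iff_tendsto_slope]
  refine (hG.tendsto.mono_left nhdsWithin_le_nhds).congr' ?_
  filter_upwards [self_mem_nhdsWithin] with t ht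
  rw [slope_def_module, h t, h a, sub_self, zero_smul, add_zero, add_sub_cancel_left,
    inv_smul_smul₀ (sub_ne_zero.mpr ht)]

section RealBanachAlgebra

variable {A : Type*} [NormedRing A] [NormedAlgebra ℝ A]

variable (A) in
noncomputable def adCLM : A →L[ℝ] A →L[ℝ] A :=
  ContinuousLinearMap.mul ℝ A - (ContinuousLinearMap.mul ℝ A).flip

@[simp]
theorem adCLM_apply (x z : A) : adCLM A x z = x * z - z * x := rfl

variable [CompleteSpace A]

-- The general lemmas on `NormedSpace.exp` assume a normed `ℚ`-algebra; restrict scalars from `ℝ`.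
theorem continuous_exp_of_real : Continuous (exp : A → A) :=
  letI : NormedAlgebra ℚ A := .restrictScalars ℚ ℝ A
  exp_continuous

theorem exp_add_of_commute_of_real {x y : A} (hxy : Commute x y) : exp (x + y) = exp x * exp y :=
  letI : NormedAlgebra ℚ A := .restrictScalars ℚ ℝ A
  exp_add_of_commute hxy

theorem hasDerivAt_exp_neg_smul_mul_exp_smul (x y : A) (s : ℝ) :
    HasDerivAt (fun s : ℝ => exp (-(s • x)) * exp (s • y))
      (exp (-(s • x)) * (y - x) * exp (s • y)) s := by
  simp_rw [← smul_neg]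
  exact ((hasDerivAt_exp_smul_const (-x) s).mul (hasDerivAt_exp_smul_const' y s)).congr_deriv
    (by noncomm_ring)

theorem exp_neg_mul_exp_eq_one_add_intervalIntegral (x y : A) :
    exp (-x) * exp y = 1 + ∫ s in (0 : ℝ)..1, exp (-(s • x)) * (y - x) * exp (s • y) := by
  have hcont : Continuous fun s : ℝ => exp (-(s • x)) * (y - x) * exp (s • y) := by
    have := continuous_exp_of_real (A := A)
    fun_prop
  rw [integral_eq_sub_of_hasDerivAt (fun s _ => hasDerivAt_exp_neg_smul_mul_exp_smul x y s)
    (hcont.intervalIntegrable _ _)]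
  simp

theorem ContinuousLinearMap.map_exp_of_map_pow {B : Type*} [NormedRing B] [NormedAlgebra ℝ B]
    (f : A →L[ℝ] B) (a : A) (h : ∀ n : ℕ, f (a ^ n) = f a ^ n) : f (exp a) = exp (f a) := by
  simp only [exp_eq_tsum ℝ, f.map_tsum (expSeries_summable' a), map_smul, h]

theorem exp_mul_apply (a z : A) : exp (ContinuousLinearMap.mul ℝ A a) z = exp a * z := by
  rw [← ContinuousLinearMap.map_exp_of_map_pow]
  · rfl
  intro n
  induction n with
  | zero => ext; simp
  | succ n ih => rw [pow_succ, pow_succ, ← ih]; ext; simp [mul_assoc]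

theorem exp_flip_mul_apply (a z : A) :
    exp ((ContinuousLinearMap.mul ℝ A).flip a) z = z * exp a := by
  rw [← ContinuousLinearMap.map_exp_of_map_pow]
  · rfl
  intro n
  induction n with
  | zero => ext; simp
  | succ n ih => rw [pow_succ', pow_succ, ← ih]; ext; simp [mul_assoc]

theorem exp_neg_adCLM_apply (x z : A) : exp (-adCLM A x) z = exp (-x) * z * exp x := by
  have hsplit : -adCLM A x =
      (ContinuousLinearMap.mul ℝ A).flip x + ContinuousLinearMap.mul ℝ A (-x) := by
    ext; simp [sub_eq_add_neg]
  have hcomm :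
      Commute ((ContinuousLinearMap.mul ℝ A).flip x) (ContinuousLinearMap.mul ℝ A (-x)) := by
    ext; simp [mul_assoc]
  rw [hsplit, exp_add_of_commute_of_real hcomm, ContinuousLinearMap.mul_def,
    ContinuousLinearMap.comp_apply, exp_mul_apply, exp_flip_mul_apply]

theorem intervalIntegral_smul_pow_div_factorial (a : A) (n : ℕ) :
    ∫ s in (0 : ℝ)..1, (n ! : ℝ)⁻¹ • (s • a) ^ n = ((n + 1)! : ℝ)⁻¹ • a ^ n := by
  simp_rw [smul_pow, smul_smul]
  rw [intervalIntegral.integral_smul_const, intervalIntegral.integral_const_mul, integral_pow]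
  push_cast [Nat.factorial_succ]
  field_simp
  simp

theorem hasSum_intervalIntegral_exp_smul (a : A) :
    HasSum (fun n : ℕ => ((n + 1)! : ℝ)⁻¹ • a ^ n) (∫ s in (0 : ℝ)..1, exp (s • a)) := by
  simp_rw [← intervalIntegral_smul_pow_div_factorial]
  refine hasSum_integral_of_dominated_convergence (fun n _ => ‖(n ! : ℝ)⁻¹ • a ^ n‖)
    (fun n => by fun_prop) (fun n => ae_of_all _ fun s hs => ?_)
    (ae_of_all _ fun _ _ => norm_expSeries_summable' a) intervalIntegrable_const
    (ae_of_all _ fun s _ => exp_series_hasSum_exp' (s • a))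
  rw [Set.uIoc_of_le zero_le_one] at hs
  have hs1 : ‖s‖ ≤ 1 := by
    rw [Real.norm_of_nonneg hs.1.le]
    exact hs.2
  rw [smul_pow, smul_comm, norm_smul, norm_pow]
  exact mul_le_of_le_one_left (norm_nonneg _) (pow_le_one₀ (norm_nonneg s) hs1)

theorem hasSum_intervalIntegral_exp_neg_smul_mul_mul_exp_smul (x z : A) :
    HasSum (fun n : ℕ => ((n + 1)! : ℝ)⁻¹ • (fun w => w * x - x * w)^[n] z)
      (∫ s in (0 : ℝ)..1, exp (-(s • x)) * z * exp (s • x)) := by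
  have hconj (s : ℝ) : exp (-(s • x)) * z * exp (s • x) = exp (s • -adCLM A x) z := by
    rw [← exp_neg_adCLM_apply, map_smul, smul_neg]
  have hint : IntervalIntegrable (fun s : ℝ => exp (s • -adCLM A x)) volume 0 1 :=
    (continuous_exp_of_real.comp (continuous_id.smul continuous_const)).intervalIntegrable _ _
  have hcoe : ⇑(-adCLM A x) = fun w => w * x - x * w := by
    ext; simp
  simp_rw [hconj, ← ContinuousLinearMap.intervalIntegral_apply hint, ← hcoe,
    ← pow_apply_eq_iterate]
  exact (hasSum_intervalIntegral_exp_smul (-adCLM A x)).mapL (ContinuousLinearMap.apply ℝ A z)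

end RealBanachAlgebra

/-- In a Banach algebra `A` over `ℝ`, the map `t ↦ exp(-x) * exp(x + t•Δ)` is differentiable
at `t = 0` with derivative `∑_{n≥0} (1/(n+1)!) • (-ad x)^n Δ`, where
`(-ad x)(z) = z*x - x*z`. -/
theorem hasDerivAt_exp_neg_mul_exp_add
    {A : Type*} [NormedRing A] [NormedAlgebra ℝ A] [CompleteSpace A] (x Δ : A) :
    HasDerivAt (fun t : ℝ => NormedSpace.exp (-x) * NormedSpace.exp (x + t • Δ))
      (∑' n : ℕ, ((Nat.factorial (n + 1) : ℝ))⁻¹ • ((fun z => z * x - x * z)^[n] Δ))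
      0 := by
  set G : ℝ → A := fun t => ∫ s in (0 : ℝ)..1, exp (-(s • x)) * Δ * exp (s • (x + t • Δ))
  have hF (t : ℝ) : exp (-x) * exp (x + t • Δ) = 1 + (t - 0) • G t := by
    simp only [exp_neg_mul_exp_eq_one_add_intervalIntegral, add_sub_cancel_left, sub_zero, G,
      ← intervalIntegral.integral_smul, mul_smul_comm, smul_mul_assoc]
  have hG : Continuous G := by
    have := continuous_exp_of_real (A := A)
    exact continuous_parametric_intervalIntegral_of_continuous' (by fun_prop) 0 1
  have hG0 : G 0 = ∑' n : ℕ, ((n + 1)! : ℝ)⁻¹ • (fun z => z * x - x * z)^[n] Δ := by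
    simpa [G] using (hasSum_intervalIntegral_exp_neg_smul_mul_mul_exp_smul x Δ).tsum_eq.symm
  exact hG0 ▸ hasDerivAt_of_eq_add_sub_smul hF hG.continuousAt
end

section
/- With ω = Σ_{i,j=1}^n A_{ij} ψ_j·φ_i in the exterior algebra Λ of R^{2n}, one has ω^n = n! · det(A) · (ψ₁·φ₁·ψ₂·φ₂·⋯·ψ_n·φ_n). (This is the fermionic-integral identity (A.31) of the paper, ∫ exp(Σ A_{ij} ψ⁺_j ψ⁻_i) dψ = det A, used in the Appendix proof of the Kontsevich-integral formula for the Alexander polynomial.) -/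
open ExteriorAlgebra

/-- The odd generator `ψᵢ` of the exterior algebra of `R^{2n} = (Fin n → R) × (Fin n → R)`:
the image of the `i`-th standard basis vector of the first factor. -/
noncomputable def fermionPsi {R : Type*} [CommRing R] {n : ℕ} (i : Fin n) :
    ExteriorAlgebra R ((Fin n → R) × (Fin n → R)) :=
  ExteriorAlgebra.ι R ((Pi.single i 1 : Fin n → R), 0)

/-- The odd generator `φᵢ` of the exterior algebra of `R^{2n} = (Fin n → R) × (Fin n → R)`:
the image of the `i`-th standard basis vector of the second factor. -/
noncomputable def fermionPhi {R : Type*} [CommRing R] {n : ℕ} (i : Fin n) :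
    ExteriorAlgebra R ((Fin n → R) × (Fin n → R)) :=
  ExteriorAlgebra.ι R (0, (Pi.single i 1 : Fin n → R))

/-! Grouping `ω` by rows, `ω = ∑ᵢ xᵢ` with `xᵢ = (∑ⱼ Aᵢⱼ ψⱼ) φᵢ`. The `xᵢ` have even degree, so
they pairwise commute, and each squares to zero, so the multinomial expansion of `ωⁿ` collapses
to `n! • x₁ ⋯ xₙ`. The product `x₁ ⋯ xₙ` is multilinear and alternating in the rows of `A`, hence
equals `det A` times its value at the identity matrix, which is `ψ₁φ₁⋯ψₙφₙ`. -/

section SquareZero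

variable {S : Type*}

theorem Commute.add_pow_succ_of_mul_self_eq_zero [Semiring S] {a b : S} (h : Commute a b)
    (ha : a * a = 0) (m : ℕ) : (a + b) ^ (m + 1) = b ^ (m + 1) + (m + 1) • (a * b ^ m) := by
  have ha_pow : ∀ k, a ^ (k + 2) = 0 := fun k => by rw [pow_succ, pow_succ, mul_assoc, ha, mul_zero]
  rw [h.add_pow, Finset.sum_range_succ', Finset.sum_range_succ',
    Finset.sum_eq_zero fun k _ => by rw [ha_pow, zero_mul, zero_mul]]
  simp only [zero_add, pow_one, pow_zero, one_mul, Nat.choose_one_right, Nat.choose_zero_right,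
    Nat.cast_one, mul_one, Nat.add_sub_cancel, Nat.sub_zero, ← Nat.cast_comm, ← nsmul_eq_mul]
  rw [add_comm]

namespace List

theorem prod_ofFn_eq_zero_of_mul_eq_zero [MonoidWithZero S] {n : ℕ} (f : Fin n → S)
    (hc : ∀ i j, Commute (f i) (f j)) {i j : Fin n} (hij : i ≠ j) (h : f i * f j = 0) :
    (ofFn f).prod = 0 := by
  have hperm : finRange n ~ i :: j :: ((finRange n).erase i).erase j :=
    (perm_cons_erase (mem_finRange i)).trans
      ((perm_cons_erase ((mem_erase_of_ne hij.symm).mpr (mem_finRange j))).cons i)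
  rw [ofFn_eq_map, (hperm.map f).prod_eq' (pairwise_map.mpr (pairwise_of_forall hc)), map_cons,
    map_cons, prod_cons, prod_cons, ← mul_assoc, h, zero_mul]

variable [Semiring S] {l : List S}

theorem sum_pow_length_succ_eq_zero (hc : l.Pairwise Commute) (hsq : ∀ x ∈ l, x * x = 0) :
    l.sum ^ (l.length + 1) = 0 := by
  induction l with
  | nil => simp
  | cons a t ih =>
    obtain ⟨hat, ht⟩ := pairwise_cons.mp hc
    have ht0 := ih ht fun x hx => hsq x (mem_cons_of_mem a hx)
    rw [sum_cons, length_cons,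
      (Commute.list_sum_right a t hat).add_pow_succ_of_mul_self_eq_zero (hsq a mem_cons_self),
      pow_succ, ht0, zero_mul, mul_zero, smul_zero, add_zero]

theorem sum_pow_length_eq_factorial_smul_prod (hc : l.Pairwise Commute)
    (hsq : ∀ x ∈ l, x * x = 0) : l.sum ^ l.length = l.length.factorial • l.prod := by
  induction l with
  | nil => simp
  | cons a t ih =>
    obtain ⟨hat, ht⟩ := pairwise_cons.mp hc
    have hsq' : ∀ x ∈ t, x * x = 0 := fun x hx => hsq x (mem_cons_of_mem a hx)
    rw [sum_cons, length_cons, prod_cons,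
      (Commute.list_sum_right a t hat).add_pow_succ_of_mul_self_eq_zero (hsq a mem_cons_self),
      sum_pow_length_succ_eq_zero ht hsq', ih ht hsq', zero_add, mul_smul_comm, smul_smul,
      Nat.factorial_succ]

end List

theorem sum_pow_eq_factorial_smul_prod_ofFn [Semiring S] {n : ℕ} (f : Fin n → S)
    (hc : ∀ i j, Commute (f i) (f j)) (hsq : ∀ i, f i * f i = 0) :
    (∑ i, f i) ^ n = n.factorial • (List.ofFn f).prod := by
  have h := List.sum_pow_length_eq_factorial_smul_prod (List.pairwise_ofFn.mpr fun i j _ => hc i j)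
    (by simpa [List.mem_ofFn] using hsq)
  rwa [List.length_ofFn, List.sum_ofFn] at h

end SquareZero

theorem AlternatingMap.apply_eq_basis_det_smul {R M N ι : Type*} [CommRing R] [AddCommGroup M]
    [Module R M] [AddCommGroup N] [Module R N] [Fintype ι] [DecidableEq ι] (e : Module.Basis ι R M)
    (f : M [⋀^ι]→ₗ[R] N) (v : ι → M) : f v = e.det v • f e := by
  suffices f = (LinearMap.toSpanSingleton R N (f e)).compAlternatingMap e.det from
    DFunLike.congr_fun this v
  refine e.ext_alternating fun w hw => ?_
  let σ : Equiv.Perm ι := Equiv.ofBijective w (Finite.injective_iff_bijective.1 hw)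
  change f (e ∘ σ) = (LinearMap.toSpanSingleton R N (f e)).compAlternatingMap e.det (e ∘ σ)
  simp [AlternatingMap.map_perm, e.det_self, Units.smul_def]

namespace ExteriorAlgebra

variable {R M : Type*} [CommRing R] [AddCommGroup M] [Module R M]

theorem commute_ι_ι_mul_ι (x y z : M) : Commute (ι R x) (ι R y * ι R z) := by
  have anticomm (a b : M) : ι R a * ι R b = -(ι R b * ι R a) :=
    eq_neg_of_add_eq_zero_left (ι_add_mul_swap a b)
  show _ = _
  rw [← mul_assoc, anticomm x y, neg_mul, mul_assoc, anticomm x z, mul_neg, neg_neg, ← mul_assoc]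

theorem commute_ι_mul_ι (x y z w : M) : Commute (ι R x * ι R y) (ι R z * ι R w) :=
  (commute_ι_ι_mul_ι x z w).mul_left (commute_ι_ι_mul_ι y z w)

theorem ι_mul_ι_mul_ι_mul_ι_eq_zero (x y z : M) : ι R x * ι R y * (ι R x * ι R z) = 0 := by
  rw [mul_assoc, (commute_ι_ι_mul_ι y x z).eq, ← mul_assoc, ← mul_assoc, ι_sq_zero, zero_mul,
    zero_mul]

variable (R) in
noncomputable def ιMultiInterleave {n : ℕ} (y : Fin n → M) :
    M [⋀^Fin n]→ₗ[R] ExteriorAlgebra R M where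
  toMultilinearMap := (MultilinearMap.mkPiAlgebraFin R n (ExteriorAlgebra R M)).compLinearMap
    fun i => (LinearMap.mulRight R (ι R (y i))).comp (ι R)
  map_eq_zero_of_eq' v i j hv hij := by
    refine List.prod_ofFn_eq_zero_of_mul_eq_zero _ (fun _ _ => commute_ι_mul_ι ..) hij ?_
    simp only [LinearMap.coe_comp, Function.comp_apply, LinearMap.mulRight_apply, hv]
    exact ι_mul_ι_mul_ι_mul_ι_eq_zero ..

variable (R) in
theorem ιMultiInterleave_apply {n : ℕ} (y v : Fin n → M) :
    ιMultiInterleave R y v = (List.ofFn fun i => ι R (v i) * ι R (y i)).prod :=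
  rfl

end ExteriorAlgebra

theorem sum_smul_fermionPsi {R : Type*} [CommRing R] {n : ℕ} (c : Fin n → R) :
    ∑ j, c j • fermionPsi j = ι R ((c, 0) : (Fin n → R) × (Fin n → R)) := by
  simp only [fermionPsi, ← map_smul, ← map_sum, Prod.smul_mk, smul_zero]
  congr 1
  ext k <;> simp [Prod.fst_sum, Prod.snd_sum, Pi.single_apply]

theorem omega_pow_eq_factorial_det_smul_general
    {R : Type*} [CommRing R] {n : ℕ} (A : Matrix (Fin n) (Fin n) R) :
    (∑ i : Fin n, ∑ j : Fin n, A i j • (fermionPsi j * fermionPhi i)) ^ n =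
      (Nat.factorial n : R) • A.det •
        ((List.finRange n).map (fun i => fermionPsi (R := R) i * fermionPhi i)).prod := by
  let φ : Fin n → (Fin n → R) × (Fin n → R) := fun i => (0, Pi.single i 1)
  let rowProd : (Fin n → R) [⋀^Fin n]→ₗ[R] ExteriorAlgebra R ((Fin n → R) × (Fin n → R)) :=
    (ιMultiInterleave R φ).compLinearMap (LinearMap.inl R (Fin n → R) (Fin n → R))
  let x : Fin n → ExteriorAlgebra R ((Fin n → R) × (Fin n → R)) := fun i =>
    ι R ((A i, 0) : (Fin n → R) × (Fin n → R)) * fermionPhi i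
  have hω : ∑ i : Fin n, ∑ j : Fin n, A i j • (fermionPsi j * fermionPhi i) = ∑ i, x i := by
    simp_rw [x, ← smul_mul_assoc, ← Finset.sum_mul, sum_smul_fermionPsi]
  have hpow : (∑ i, x i) ^ n = n.factorial • (List.ofFn x).prod :=
    sum_pow_eq_factorial_smul_prod_ofFn x (fun _ _ => commute_ι_mul_ι _ _ _ _)
      (fun _ => ι_mul_ι_mul_ι_mul_ι_eq_zero _ _ _)
  have hrows : (List.ofFn x).prod = rowProd fun i => A i := rfl
  have hdet : (Pi.basisFun R (Fin n)).det (fun i => A i) = A.det := Pi.basisFun_det_apply _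
  have hbasis : rowProd (Pi.basisFun R (Fin n)) =
      ((List.finRange n).map fun i => fermionPsi (R := R) i * fermionPhi i).prod := by
    rw [← List.ofFn_eq_map]
    simp only [AlternatingMap.compLinearMap_apply, Pi.basisFun_apply, LinearMap.coe_inl,
      ιMultiInterleave_apply, fermionPsi, fermionPhi, rowProd, φ]
  rw [hω, hpow, hrows, rowProd.apply_eq_basis_det_smul (Pi.basisFun R (Fin n)), hdet, hbasis,
    Nat.cast_smul_eq_nsmul]

/-- Fermionic Gaussian integral: with `ω = Σ_{i,j} A_{ij} ψ_j φ_i` in the exterior algebra of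
`R^{2n}`, one has `ω^n = n! · det A · ψ₁φ₁⋯ψ_nφ_n`. -/
theorem omega_pow_eq_factorial_det_smul
    {R : Type*} [CommRing R] {n : ℕ} (hn : 1 ≤ n) (A : Matrix (Fin n) (Fin n) R) :
    (∑ i : Fin n, ∑ j : Fin n, A i j • (fermionPsi j * fermionPhi i)) ^ n =
      (Nat.factorial n : R) • A.det •
        ((List.finRange n).map (fun i => fermionPsi (R := R) i * fermionPhi i)).prod :=
  omega_pow_eq_factorial_det_smul_general A
end
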